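/- The graph K_1 ⊔ K_7 (the disjoint union of an isolated vertex and a complete graph on 7 vertices) contains no two vertex-disjoint copies of the path P_4, and its complement contains no Jahangir graph J_4 as a subgraph. -/

import Mathlib

open SimpleGraph

/-- `G` is contained in `F` as a (not necessarily induced) subgraph, i.e. there is an
injective graph homomorphism from `G` into `F`. -/
def Contains {α : Type*} {β : Type*} (G : SimpleGraph α) (F : SimpleGraph β) : Prop :=
  ∃ f : α → β, Function.Injective f ∧ ∀ ⦃a b : α⦄, G.Adj a b → F.Adj (f a) (f b)

/-- The Jahangir graph `J_{2m}` on `2m+1` vertices: a cycle on the vertices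
`0, 1, …, 2m-1` together with one additional hub vertex (index `2m`) adjacent to the
alternate cycle vertices `0, 2, …, 2m-2`. -/
def jahangir (m : ℕ) : SimpleGraph (Fin (2 * m + 1)) :=
  SimpleGraph.fromRel (fun a b =>
    (a.val < 2 * m ∧ b.val < 2 * m ∧ b.val = (a.val + 1) % (2 * m)) ∨
    (a.val = 2 * m ∧ b.val < 2 * m ∧ b.val % 2 = 0))

/-- The disjoint union of `k` copies of the graph `G`. -/
def kCopies {α : Type*} (k : ℕ) (G : SimpleGraph α) : SimpleGraph (Fin k × α) where
  Adj a b := a.1 = b.1 ∧ G.Adj a.2 b.2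
  symm := ⟨fun _ _ h => ⟨h.1.symm, h.2.symm⟩⟩
  loopless := ⟨fun a h => G.irrefl h.2⟩

/-- The disjoint union `K_a ⊔ K_b` of two complete graphs. -/
def twoCliques (a b : ℕ) : SimpleGraph (Fin a ⊕ Fin b) :=
  SimpleGraph.fromRel (fun x y => x.isLeft = y.isLeft)

/-- `ramseyProp G H N` says that every simple graph `F` on `N` vertices contains `G`
as a subgraph, or its complement contains `H` as a subgraph.  The Ramsey number
`R(G, H)` is the least `N` with this property. -/
def ramseyProp {α : Type*} {β : Type*} (G : SimpleGraph α) (H : SimpleGraph β) (N : ℕ) : Prop :=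
  ∀ F : SimpleGraph (Fin N), Contains G F ∨ Contains H Fᶜ

/-!
The graph `K_1 ⊔ K_7` has as many vertices as two disjoint copies of `P_4`, so an embedding of
the latter would be a bijection and would hit the isolated vertex, although `2 P_4` has no
isolated vertex. The complement of `K_1 ⊔ K_7` is the star `K_{1,7}`, in which every edge goes
through the centre, so it has no two disjoint edges; but the cycle of `J_4` has two.
-/

namespace Contains

variable {α β : Type*} {G : SimpleGraph α} {F : SimpleGraph β}

theorem not_of_card_eq_of_isolated [Finite α] [Finite β] (hcard : Nat.card α = Nat.card β)
    (hG : ∀ a, ∃ b, G.Adj a b) {v : β} (hv : ∀ w, ¬ F.Adj v w) : ¬ Contains G F := by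
  rintro ⟨f, hinj, hadj⟩
  obtain ⟨a, rfl⟩ := (hinj.bijective_of_nat_card_le hcard.ge).2 v
  obtain ⟨b, hab⟩ := hG a
  exact hv _ (hadj hab)

theorem not_of_forall_adj_center {v : β} (hF : ∀ x y, F.Adj x y → x = v ∨ y = v)
    {a b c d : α} (hab : G.Adj a b) (hcd : G.Adj c d)
    (hac : a ≠ c) (had : a ≠ d) (hbc : b ≠ c) (hbd : b ≠ d) : ¬ Contains G F := by
  rintro ⟨f, hinj, hadj⟩
  rcases hF _ _ (hadj hab) with h | h <;> rcases hF _ _ (hadj hcd) with h' | h'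
  exacts [hac (hinj (h.trans h'.symm)), had (hinj (h.trans h'.symm)),
    hbc (hinj (h.trans h'.symm)), hbd (hinj (h.trans h'.symm))]

end Contains

theorem pathGraph_exists_adj {n : ℕ} (hn : 2 ≤ n) (u : Fin n) : ∃ w, (pathGraph n).Adj u w := by
  simp only [pathGraph_adj]
  by_cases hu : u.val + 1 < n
  · exact ⟨⟨u.val + 1, hu⟩, Or.inl rfl⟩
  · exact ⟨⟨u.val - 1, by omega⟩, Or.inr (by simp only; omega)⟩

theorem kCopies_exists_adj {k : ℕ} (hG : ∀ a, ∃ b, G.Adj a b) (x : Fin k × α) :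
    ∃ y, (kCopies k G).Adj x y :=
  let ⟨b, hb⟩ := hG x.2
  ⟨(x.1, b), rfl, hb⟩

theorem jahangir_adj_succ {m i : ℕ} (hi : i + 1 < 2 * m) :
    (jahangir m).Adj ⟨i, by omega⟩ ⟨i + 1, by omega⟩ := by
  rw [jahangir, fromRel_adj]
  refine ⟨by simp, Or.inl (Or.inl ⟨Nat.lt_of_succ_lt hi, hi, (Nat.mod_eq_of_lt hi).symm⟩)⟩

theorem twoCliques_adj {a b : ℕ} {x y : Fin a ⊕ Fin b} :
    (twoCliques a b).Adj x y ↔ x ≠ y ∧ x.isLeft = y.isLeft := by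
  simp [twoCliques, eq_comm]

theorem twoCliques_one_not_adj_inl {b : ℕ} (y : Fin 1 ⊕ Fin b) :
    ¬ (twoCliques 1 b).Adj (Sum.inl 0) y := by
  rcases y with i | i
  · rw [Subsingleton.elim i 0]
    exact (twoCliques 1 b).irrefl
  · simp [twoCliques_adj]

theorem twoCliques_one_compl_adj {b : ℕ} {x y : Fin 1 ⊕ Fin b} (h : (twoCliques 1 b)ᶜ.Adj x y) :
    x = Sum.inl 0 ∨ y = Sum.inl 0 := by
  rw [compl_adj, twoCliques_adj] at h
  rcases x with i | i
  · exact Or.inl (congrArg Sum.inl (Subsingleton.elim i 0))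
  rcases y with j | j
  · exact Or.inr (congrArg Sum.inl (Subsingleton.elim j 0))
  · exact absurd ⟨h.1, rfl⟩ h.2

/-- `K_1 ⊔ K_7` contains no two vertex-disjoint copies of `P_4`, and its complement
contains no `J_4`. -/
theorem twoP4_J4_lower :
    ¬ Contains (kCopies 2 (pathGraph 4)) (twoCliques 1 7) ∧
    ¬ Contains (jahangir 2) (twoCliques 1 7)ᶜ :=
  ⟨Contains.not_of_card_eq_of_isolated (by simp)
      (kCopies_exists_adj (pathGraph_exists_adj le_add_self)) twoCliques_one_not_adj_inl,
    Contains.not_of_forall_adj_center (fun _ _ => twoCliques_one_compl_adj)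
      (jahangir_adj_succ (m := 2) (i := 0) (by norm_num))
      (jahangir_adj_succ (m := 2) (i := 2) (by norm_num)) (by decide) (by decide) (by decide)
      (by decide)⟩
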